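/- arXiv:1605.04059 — 2 statements merged into one kernel-verified Lean document; each statement's English description precedes it below -/
import Mathlib

section
/- Let Σ be a positive semidefinite p × p real matrix and let T₀ ⊆ {1,…,p} with |T₀| = S ≥ 1 and p ≥ 3S. If 1 − δ_{2S}(Σ) − θ_{S,2S}(Σ) > 0, then φ_{2S}(T₀; Σ) > 0. -/
open Matrix Finset

open Matrix Finset

noncomputable def l1 {p : ℕ} (h : Fin p → ℝ) : ℝ := ∑ j, |h j|
noncomputable def l2 {p : ℕ} (h : Fin p → ℝ) : ℝ := Real.sqrt (∑ j, (h j) ^ 2)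
noncomputable def lqNorm {p : ℕ} (q : ℝ) (h : Fin p → ℝ) : ℝ := (∑ j, |h j| ^ q) ^ (1 / q)
noncomputable def linf {p : ℕ} (h : Fin p → ℝ) : ℝ := ⨆ j, |h j|
def restr {p : ℕ} (T : Finset (Fin p)) (h : Fin p → ℝ) : Fin p → ℝ :=
  fun j => if j ∈ T then h j else 0
def coneC {p : ℕ} (T : Finset (Fin p)) (h : Fin p → ℝ) : Prop :=
  l1 (restr Tᶜ h) ≤ l1 (restr T h)
noncomputable def quad {p : ℕ} (M : Matrix (Fin p) (Fin p) ℝ) (h : Fin p → ℝ) : ℝ :=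
  h ⬝ᵥ M.mulVec h

/-- Compatibility factor `κ(T₀; M) = inf_{0 ≠ h ∈ C_{T₀}} √|T₀| (hᵀMh)^{1/2} / ‖h_{T₀}‖₁`. -/
noncomputable def kappa {p : ℕ} (T0 : Finset (Fin p)) (M : Matrix (Fin p) (Fin p) ℝ) : ℝ :=
  sInf {x | ∃ h : Fin p → ℝ, h ≠ 0 ∧ coneC T0 h ∧
    x = Real.sqrt (T0.card) * Real.sqrt (quad M h) / l1 (restr T0 h)}

/-- Restricted eigenvalue `RE(T₀; M) = inf_{0 ≠ h ∈ C_{T₀}} (hᵀMh)^{1/2} / ‖h‖₂`. -/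
noncomputable def RE {p : ℕ} (T0 : Finset (Fin p)) (M : Matrix (Fin p) (Fin p) ℝ) : ℝ :=
  sInf {x | ∃ h : Fin p → ℝ, h ≠ 0 ∧ coneC T0 h ∧ x = Real.sqrt (quad M h) / l2 h}

/-- Weak cone invertibility factor
`F_q(T₀; M) = inf_{0 ≠ h ∈ C_{T₀}} |T₀|^{1/q} (hᵀMh) / (‖h_{T₀}‖₁ ‖h‖_q)`. -/
noncomputable def Fq {p : ℕ} (q : ℝ) (T0 : Finset (Fin p)) (M : Matrix (Fin p) (Fin p) ℝ) : ℝ :=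
  sInf {x | ∃ h : Fin p → ℝ, h ≠ 0 ∧ coneC T0 h ∧
    x = (T0.card : ℝ) ^ (1 / q) * quad M h / (l1 (restr T0 h) * lqNorm q h)}

/-- The factor `φ_{2S}(T₀; M)`, an infimum over supersets `T ⊇ T₀` with `|T| ≤ 2S` and
nonzero `h ∈ D_{T₀,T}` of `(hᵀMh)^{1/2}/‖h_T‖₂`. -/
noncomputable def phi2S {p : ℕ} (S : ℕ) (T0 : Finset (Fin p)) (M : Matrix (Fin p) (Fin p) ℝ) : ℝ :=
  sInf {x | ∃ T : Finset (Fin p), T0 ⊆ T ∧ T.card ≤ 2 * S ∧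
    ∃ h : Fin p → ℝ, h ≠ 0 ∧ coneC T0 h ∧
      (∀ j ∈ T \ T0, linf (restr Tᶜ h) ≤ |h j|) ∧
      x = Real.sqrt (quad M h) / l2 (restr T h)}

/-- Restricted isometry constant `δ_N(M)`: the smallest `δ ≥ 0` such that
`(1-δ)‖h‖₂² ≤ hᵀM_{T,T}h ≤ (1+δ)‖h‖₂²` for all `T` with `|T| ≤ N` and `h` supported on `T`. -/
noncomputable def deltaRIC {p : ℕ} (N : ℕ) (M : Matrix (Fin p) (Fin p) ℝ) : ℝ :=
  sInf {δ : ℝ | 0 ≤ δ ∧ ∀ T : Finset (Fin p), T.card ≤ N →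
    ∀ h : Fin p → ℝ, (∀ j, j ∉ T → h j = 0) →
      (1 - δ) * (∑ j, (h j) ^ 2) ≤ quad M h ∧ quad M h ≤ (1 + δ) * (∑ j, (h j) ^ 2)}

/-- Restricted orthogonality constant `θ_{S,S'}(M)`: the smallest `θ ≥ 0` such that
`|hᵀM_{T,T'}h'| ≤ θ‖h‖₂‖h'‖₂` for all disjoint `T, T'` with `|T| ≤ S`, `|T'| ≤ S'`. -/
noncomputable def thetaROC {p : ℕ} (S S' : ℕ) (M : Matrix (Fin p) (Fin p) ℝ) : ℝ :=
  sInf {θ : ℝ | 0 ≤ θ ∧ ∀ T T' : Finset (Fin p), Disjoint T T' →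
    T.card ≤ S → T'.card ≤ S' →
    ∀ h h' : Fin p → ℝ, (∀ j, j ∉ T → h j = 0) → (∀ j, j ∉ T' → h' j = 0) →
      |h ⬝ᵥ M.mulVec h'| ≤ θ * l2 h * l2 h'}

/-!
Approximate `δ_{2S}(Σ)` and `θ_{S,2S}(Σ)` from above by admissible constants `δ, θ` with
`1 - δ - θ > 0`. Given `h ∈ D_{T₀,T}`, enlarge `T` to a set `T'` of size `2S` by the largest
remaining entries of `h`; then the `S` entries of `h` on `T' \ T₀` dominate every entry off `T'`.
Cutting `T'ᶜ` into blocks of `S` coordinates in decreasing order and using the cone condition gives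
`|h_{T'ᶜ}ᵀ Σ h_{T'}| ≤ θ ‖h_{T'}‖₂²`, and Cauchy–Schwarz for the form `Σ` then yields
`(1 - δ - θ) ‖h_T‖₂ ≤ (1 - δ - θ) ‖h_{T'}‖₂ ≤ √(1 + δ) (hᵀΣh)^{1/2}`.
Hence `φ_{2S}(T₀; Σ) ≥ (1 - δ - θ) / √(1 + δ) > 0`.
-/

section Restriction

variable {p : ℕ}

lemma restr_of_notMem {T : Finset (Fin p)} (h : Fin p → ℝ) {j : Fin p} (hj : j ∉ T) :
    restr T h j = 0 :=
  if_neg hj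

lemma restr_add_restr_sdiff {B U : Finset (Fin p)} (hBU : B ⊆ U) (h : Fin p → ℝ) :
    restr B h + restr (U \ B) h = restr U h := by
  ext j
  by_cases hB : j ∈ B
  · simp [restr, hB, hBU hB]
  · by_cases hU : j ∈ U <;> simp [restr, hB, hU]

lemma restr_add_restr_compl (T : Finset (Fin p)) (h : Fin p → ℝ) :
    restr T h + restr Tᶜ h = h := by
  ext j
  by_cases hj : j ∈ T <;> simp [restr, hj]

lemma l1_restr (T : Finset (Fin p)) (h : Fin p → ℝ) : l1 (restr T h) = ∑ j ∈ T, |h j| := by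
  simp [l1, restr, apply_ite, Finset.sum_ite_mem]

lemma l2_restr (T : Finset (Fin p)) (h : Fin p → ℝ) :
    l2 (restr T h) = √(∑ j ∈ T, h j ^ 2) := by
  simp [l2, restr, ite_pow, Finset.sum_ite_mem]

lemma l2_nonneg (h : Fin p → ℝ) : 0 ≤ l2 h := Real.sqrt_nonneg _

lemma l2_restr_mono {T T' : Finset (Fin p)} (hTT' : T ⊆ T') (h : Fin p → ℝ) :
    l2 (restr T h) ≤ l2 (restr T' h) := by
  simp only [l2_restr]
  exact Real.sqrt_le_sqrt <| Finset.sum_le_sum_of_subset_of_nonneg hTT' fun j _ _ => sq_nonneg _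

lemma abs_le_l2 (h : Fin p → ℝ) (j : Fin p) : |h j| ≤ l2 h := by
  rw [← Real.sqrt_sq_eq_abs]
  exact Real.sqrt_le_sqrt <|
    Finset.single_le_sum (f := fun k => h k ^ 2) (fun k _ => sq_nonneg _) (Finset.mem_univ j)

lemma abs_le_linf (h : Fin p → ℝ) (j : Fin p) : |h j| ≤ linf h :=
  le_ciSup (f := fun k => |h k|) (Set.finite_range _).bddAbove j

lemma l2_restr_pos {T : Finset (Fin p)} {h : Fin p → ℝ} {j : Fin p} (hj : j ∈ T) (hhj : h j ≠ 0) :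
    0 < l2 (restr T h) := by
  rw [l2_restr]
  exact Real.sqrt_pos.2 <| Finset.sum_pos' (fun k _ => sq_nonneg _) ⟨j, hj, by positivity⟩

lemma exists_mem_ne_zero_of_coneC {T : Finset (Fin p)} {h : Fin p → ℝ} (hh : h ≠ 0)
    (hc : coneC T h) : ∃ j ∈ T, h j ≠ 0 := by
  by_contra! hT
  have hTc : ∀ j ∈ Tᶜ, h j = 0 := by
    have hl1 : ∑ j ∈ Tᶜ, |h j| ≤ 0 := by
      have hT0 : ∑ j ∈ T, |h j| = 0 := Finset.sum_eq_zero fun j hj => by rw [hT j hj, abs_zero]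
      simpa [coneC, l1_restr, hT0] using hc
    intro j hj
    exact abs_eq_zero.1 <| (Finset.sum_eq_zero_iff_of_nonneg fun k _ => abs_nonneg (h k)).1
      (hl1.antisymm (Finset.sum_nonneg fun k _ => abs_nonneg _)) j hj
  exact hh <| funext fun j => if hj : j ∈ T then hT j hj else hTc j (Finset.mem_compl.2 hj)

lemma l2_restr_le_sqrt_mul {S : ℕ} {V : Finset (Fin p)} (hV : V.card ≤ S) {h : Fin p → ℝ}
    {t : ℝ} (ht0 : 0 ≤ t) (ht : ∀ j ∈ V, |h j| ≤ t) : l2 (restr V h) ≤ √S * t := by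
  rw [l2_restr, ← Real.sqrt_sq ht0, ← Real.sqrt_mul (Nat.cast_nonneg S)]
  refine Real.sqrt_le_sqrt ?_
  calc ∑ j ∈ V, h j ^ 2 ≤ V.card • t ^ 2 :=
        Finset.sum_le_card_nsmul _ _ _ fun j hj => by
          rw [← sq_abs]; exact pow_le_pow_left₀ (abs_nonneg _) (ht j hj) 2
    _ ≤ S * t ^ 2 := by
        rw [nsmul_eq_mul]; gcongr

lemma l1_restr_le_sqrt_card_mul_l2 (T : Finset (Fin p)) (h : Fin p → ℝ) :
    l1 (restr T h) ≤ √T.card * l2 (restr T h) := by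
  rw [l1_restr, l2_restr, ← Real.sqrt_mul (Nat.cast_nonneg _),
    Real.le_sqrt (Finset.sum_nonneg fun j _ => abs_nonneg _) (by positivity)]
  simpa using sq_sum_le_card_mul_sum_sq (s := T) (f := fun j => |h j|)

end Restriction

section QuadraticForm

variable {p : ℕ} {M : Matrix (Fin p) (Fin p) ℝ}

lemma quad_nonneg (hM : M.PosSemidef) (h : Fin p → ℝ) : 0 ≤ quad M h := by
  simpa [quad] using hM.dotProduct_mulVec_nonneg h

lemma dotProduct_mulVec_comm (hM : M.PosSemidef) (u v : Fin p → ℝ) :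
    u ⬝ᵥ M *ᵥ v = v ⬝ᵥ M *ᵥ u := by
  have hMt : Mᵀ = M := by
    simpa [Matrix.conjTranspose_eq_transpose_of_trivial] using hM.isHermitian.eq
  rw [Matrix.dotProduct_mulVec, ← hMt, Matrix.vecMul_transpose, hMt, dotProduct_comm]

lemma sq_dotProduct_mulVec_le (hM : M.PosSemidef) (u v : Fin p → ℝ) :
    (u ⬝ᵥ M *ᵥ v) ^ 2 ≤ quad M u * quad M v := by
  have := LinearMap.BilinForm.apply_mul_apply_le_of_forall_zero_le (Matrix.toLinearMap₂' ℝ M)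
    (fun x => by rw [Matrix.toLinearMap₂'_apply']; exact quad_nonneg hM x) u v
  simpa [Matrix.toLinearMap₂'_apply', quad, sq, dotProduct_mulVec_comm hM v u] using this

lemma abs_dotProduct_mulVec_le (M : Matrix (Fin p) (Fin p) ℝ) (u v : Fin p → ℝ) :
    |u ⬝ᵥ M *ᵥ v| ≤ (∑ i, ∑ j, |M i j|) * l2 u * l2 v := by
  simp only [dotProduct, Matrix.mulVec, Finset.mul_sum, Finset.sum_mul]
  refine (Finset.abs_sum_le_sum_abs _ _).trans <| Finset.sum_le_sum fun i _ =>
    (Finset.abs_sum_le_sum_abs _ _).trans <| Finset.sum_le_sum fun j _ => ?_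
  calc |u i * (M i j * v j)| = |M i j| * (|u i| * |v j|) := by simp only [abs_mul]; ring
    _ ≤ |M i j| * (l2 u * l2 v) := mul_le_mul_of_nonneg_left
        (mul_le_mul (abs_le_l2 u i) (abs_le_l2 v j) (abs_nonneg _) (l2_nonneg u)) (abs_nonneg _)
    _ = _ := by ring

end QuadraticForm

section RestrictedConstants

variable {p : ℕ}

def IsRICBound (N : ℕ) (M : Matrix (Fin p) (Fin p) ℝ) (δ : ℝ) : Prop :=
  0 ≤ δ ∧ ∀ T : Finset (Fin p), T.card ≤ N →
    ∀ h : Fin p → ℝ, (∀ j, j ∉ T → h j = 0) →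
      (1 - δ) * (∑ j, (h j) ^ 2) ≤ quad M h ∧ quad M h ≤ (1 + δ) * (∑ j, (h j) ^ 2)

def IsROCBound (S S' : ℕ) (M : Matrix (Fin p) (Fin p) ℝ) (θ : ℝ) : Prop :=
  0 ≤ θ ∧ ∀ T T' : Finset (Fin p), Disjoint T T' →
    T.card ≤ S → T'.card ≤ S' →
    ∀ h h' : Fin p → ℝ, (∀ j, j ∉ T → h j = 0) → (∀ j, j ∉ T' → h' j = 0) →
      |h ⬝ᵥ M.mulVec h'| ≤ θ * l2 h * l2 h'

lemma deltaRIC_eq_sInf (N : ℕ) (M : Matrix (Fin p) (Fin p) ℝ) :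
    deltaRIC N M = sInf {δ | IsRICBound N M δ} := rfl

lemma thetaROC_eq_sInf (S S' : ℕ) (M : Matrix (Fin p) (Fin p) ℝ) :
    thetaROC S S' M = sInf {θ | IsROCBound S S' M θ} := rfl

lemma isRICBound_nonempty (N : ℕ) (M : Matrix (Fin p) (Fin p) ℝ) :
    {δ | IsRICBound N M δ}.Nonempty := by
  set C := ∑ i, ∑ j, |M i j|
  refine ⟨1 + C, by positivity, fun T _ h _ => ?_⟩
  have hquad : |quad M h| ≤ C * ∑ j, h j ^ 2 := by
    have := abs_dotProduct_mulVec_le M h h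
    rwa [mul_assoc, ← sq, l2, Real.sq_sqrt (by positivity)] at this
  have hsq : 0 ≤ ∑ j, h j ^ 2 := by positivity
  constructor <;> nlinarith [abs_le.1 hquad]

lemma isROCBound_nonempty (S S' : ℕ) (M : Matrix (Fin p) (Fin p) ℝ) :
    {θ | IsROCBound S S' M θ}.Nonempty :=
  ⟨_, by positivity, fun _ _ _ _ _ u v _ _ => abs_dotProduct_mulVec_le M u v⟩

end RestrictedConstants

lemma Finset.exists_subset_card_eq_forall_sdiff_le {α β : Type*} [DecidableEq α] [LinearOrder β]
    (f : α → β) {n : ℕ} {U : Finset α} (hn : n ≤ U.card) :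
    ∃ A ⊆ U, A.card = n ∧ ∀ a ∈ A, ∀ b ∈ U \ A, f b ≤ f a := by
  induction n with
  | zero => exact ⟨∅, Finset.empty_subset U, rfl, by simp⟩
  | succ n ih =>
    obtain ⟨A, hAU, hAcard, hAtop⟩ := ih (by omega)
    have hne : (U \ A).Nonempty := by
      rw [← Finset.card_pos, Finset.card_sdiff_of_subset hAU]; omega
    obtain ⟨b₀, hb₀, hmax⟩ := Finset.exists_max_image (U \ A) f hne
    obtain ⟨hb₀U, hb₀A⟩ := Finset.mem_sdiff.1 hb₀
    refine ⟨insert b₀ A, Finset.insert_subset hb₀U hAU, by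
      rw [Finset.card_insert_of_notMem hb₀A, hAcard], fun a ha b hb => ?_⟩
    have hbUA : b ∈ U \ A := by
      simp only [Finset.mem_sdiff, Finset.mem_insert, not_or] at hb ⊢
      exact ⟨hb.1, hb.2.2⟩
    rcases Finset.mem_insert.1 ha with rfl | haA
    · exact hmax b hbUA
    · exact hAtop a haA b hbUA

section Shifting

variable {p : ℕ} {M : Matrix (Fin p) (Fin p) ℝ}

/-- Cutting `U` into blocks of `S` coordinates of decreasing size, the `l2` norm of each block is at
most `√S` times the smallest entry of the previous block, hence at most `1/√S` times the `l1`
norm of the previous block. -/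
lemma sqrt_mul_abs_restr_dotProduct_le {S S' : ℕ} {θ : ℝ} (hθ : IsROCBound S S' M θ)
    {g : Fin p → ℝ} {Tg : Finset (Fin p)} (hg : ∀ j, j ∉ Tg → g j = 0) (hTg : Tg.card ≤ S')
    (h : Fin p → ℝ) {U : Finset (Fin p)} (hU : Disjoint U Tg) {t : ℝ} (ht0 : 0 ≤ t)
    (ht : ∀ j ∈ U, |h j| ≤ t) :
    √S * |restr U h ⬝ᵥ M *ᵥ g| ≤ θ * l2 g * (S * t + ∑ j ∈ U, |h j|) := by
  have hθg : 0 ≤ θ * l2 g := mul_nonneg hθ.1 (l2_nonneg g)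
  rcases Nat.eq_zero_or_pos S with rfl | hS
  · simpa using mul_nonneg hθg (Finset.sum_nonneg fun j _ => abs_nonneg (h j))
  have block {V : Finset (Fin p)} (hV : V.card ≤ S) (hVg : Disjoint V Tg) {s : ℝ} (hs0 : 0 ≤ s)
      (hs : ∀ j ∈ V, |h j| ≤ s) : √S * |restr V h ⬝ᵥ M *ᵥ g| ≤ θ * l2 g * (S * s) := by
    have hroc := hθ.2 V Tg hVg hV hTg _ g (fun j => restr_of_notMem h) hg
    have hSS : √S * √S = S := Real.mul_self_sqrt (Nat.cast_nonneg S)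
    calc √S * |restr V h ⬝ᵥ M *ᵥ g| ≤ √S * (θ * (√S * s) * l2 g) := by
          gcongr
          exact hroc.trans <| mul_le_mul_of_nonneg_right
            (mul_le_mul_of_nonneg_left (l2_restr_le_sqrt_mul hV hs0 hs) hθ.1) (l2_nonneg g)
      _ = θ * l2 g * (S * s) := by linear_combination (θ * l2 g * s) * hSS
  induction hn : U.card using Nat.strong_induction_on generalizing U t with
  | _ n ih =>
  rcases le_or_gt n S with hnS | hSn
  · calc _ ≤ θ * l2 g * (S * t) := block (hn ▸ hnS) hU ht0 ht
      _ ≤ _ := by gcongr; exact le_add_of_nonneg_right (Finset.sum_nonneg fun j _ => abs_nonneg _)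
  obtain ⟨B, hBU, hBcard, hBtop⟩ :=
    Finset.exists_subset_card_eq_forall_sdiff_le (fun j => |h j|) (n := S) (U := U) (by omega)
  obtain ⟨j₀, hj₀B, hj₀min⟩ := Finset.exists_min_image B (fun j => |h j|)
    (Finset.card_pos.1 (by omega))
  have hrest := ih (n - S) (by omega) (hU.mono_left Finset.sdiff_subset) (abs_nonneg (h j₀))
    (fun j hj => hBtop j₀ hj₀B j hj) (by rw [Finset.card_sdiff_of_subset hBU, hn, hBcard])
  have hBsum : S * |h j₀| ≤ ∑ j ∈ B, |h j| := by
    simpa [hBcard] using Finset.card_nsmul_le_sum B (fun j => |h j|) _ hj₀min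
  calc √S * |restr U h ⬝ᵥ M *ᵥ g|
      ≤ √S * |restr B h ⬝ᵥ M *ᵥ g| + √S * |restr (U \ B) h ⬝ᵥ M *ᵥ g| := by
        rw [← mul_add, ← restr_add_restr_sdiff hBU, add_dotProduct]
        gcongr
        exact abs_add_le _ _
    _ ≤ θ * l2 g * (S * t) + θ * l2 g * (S * |h j₀| + ∑ j ∈ U \ B, |h j|) :=
        add_le_add (block hBcard.le (hU.mono_left hBU) ht0 fun j hj => ht j (hBU hj)) hrest
    _ ≤ θ * l2 g * (S * t + ∑ j ∈ U, |h j|) := by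
        rw [← Finset.sum_sdiff hBU, ← mul_add]
        exact mul_le_mul_of_nonneg_left (by linarith) hθg

end Shifting

section Extension

variable {p : ℕ}

/-- Complete `T` to `N` coordinates by the largest entries of `h` off `T`; the condition defining
`D_{T₀,T}` ensures that the entries kept outside `T₀` still dominate all discarded ones. -/
lemma exists_superset_card_eq_of_linf_le {N : ℕ} {T0 T : Finset (Fin p)} (hT0T : T0 ⊆ T)
    (hT0 : T0.card < N) (hT : T.card ≤ N) (hN : N ≤ p) {h : Fin p → ℝ}
    (hD : ∀ j ∈ T \ T0, linf (restr Tᶜ h) ≤ |h j|) :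
    ∃ T', T ⊆ T' ∧ T'.card = N ∧
      ∃ t, 0 ≤ t ∧ (∀ j ∈ T' \ T0, t ≤ |h j|) ∧ ∀ j ∈ T'ᶜ, |h j| ≤ t := by
  obtain ⟨A, hATc, hAcard, hAtop⟩ := Finset.exists_subset_card_eq_forall_sdiff_le
    (fun j => |h j|) (n := N - T.card) (U := Tᶜ) (by simp [Finset.card_compl]; omega)
  have hTA : Disjoint T A := Finset.disjoint_right.2 fun a ha => Finset.mem_compl.1 (hATc ha)
  have hT'card : (T ∪ A).card = N := by rw [Finset.card_union_of_disjoint hTA]; omega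
  have hT0T' : T0 ⊆ T ∪ A := hT0T.trans Finset.subset_union_left
  obtain ⟨j₀, hj₀, hj₀min⟩ := Finset.exists_min_image ((T ∪ A) \ T0) (fun j => |h j|)
    (Finset.card_pos.1 (by rw [Finset.card_sdiff_of_subset hT0T']; omega))
  refine ⟨T ∪ A, Finset.subset_union_left, hT'card, |h j₀|, abs_nonneg _, hj₀min, fun j hj => ?_⟩
  simp only [Finset.mem_compl, Finset.mem_union, not_or] at hj
  obtain ⟨hj₀TA, hj₀T0⟩ := Finset.mem_sdiff.1 hj₀
  rcases Finset.mem_union.1 hj₀TA with hj₀T | hj₀A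
  · calc |h j| = |restr Tᶜ h j| := by simp [restr, hj.1]
      _ ≤ linf (restr Tᶜ h) := abs_le_linf _ j
      _ ≤ |h j₀| := hD j₀ (Finset.mem_sdiff.2 ⟨hj₀T, hj₀T0⟩)
  · exact hAtop j₀ hj₀A j (Finset.mem_sdiff.2 ⟨Finset.mem_compl.2 hj.1, hj.2⟩)

lemma card_mul_add_sum_compl_le {T0 T' : Finset (Fin p)} {h : Fin p → ℝ} (hc : coneC T0 h)
    (hT0T' : T0 ⊆ T') (hcard : (T' \ T0).card = T0.card) {t : ℝ}
    (ht : ∀ j ∈ T' \ T0, t ≤ |h j|) :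
    T0.card * t + ∑ j ∈ T'ᶜ, |h j| ≤ √T0.card * l2 (restr T' h) := by
  have hblock : T0.card * t ≤ ∑ j ∈ T' \ T0, |h j| := by
    simpa [hcard] using Finset.card_nsmul_le_sum _ (fun j => |h j|) _ ht
  have hsplit : ∑ j ∈ T' \ T0, |h j| + ∑ j ∈ T'ᶜ, |h j| = l1 (restr T0ᶜ h) := by
    rw [l1_restr, ← Finset.sum_sdiff (Finset.compl_subset_compl.2 hT0T'), compl_sdiff_compl]
  calc T0.card * t + ∑ j ∈ T'ᶜ, |h j| ≤ l1 (restr T0ᶜ h) := by linarith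
    _ ≤ l1 (restr T0 h) := hc
    _ ≤ √T0.card * l2 (restr T0 h) := l1_restr_le_sqrt_card_mul_l2 T0 h
    _ ≤ √T0.card * l2 (restr T' h) := by gcongr; exact l2_restr_mono hT0T' h

end Extension

section LowerBound

variable {p : ℕ} {M : Matrix (Fin p) (Fin p) ℝ}

/-- With `u = h_T`, compare `uᵀMu ≥ (1-δ)‖u‖²` with `uᵀMu = hᵀMu - h_{Tᶜ}ᵀMu`, bounding `hᵀMu` by
Cauchy–Schwarz for the form `M` and `h_{Tᶜ}ᵀMu` by `hcross`. -/
lemma one_sub_sub_mul_l2_le (hM : M.PosSemidef) {N : ℕ} {δ : ℝ} (hδ : IsRICBound N M δ)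
    {T : Finset (Fin p)} (hT : T.card ≤ N) {θ : ℝ} (h : Fin p → ℝ)
    (hcross : |restr Tᶜ h ⬝ᵥ M *ᵥ restr T h| ≤ θ * l2 (restr T h) ^ 2) :
    (1 - δ - θ) * l2 (restr T h) ≤ √(1 + δ) * √(quad M h) := by
  set u := restr T h
  set w := l2 u
  have hw0 : 0 ≤ w := l2_nonneg u
  have hw2 : ∑ j, u j ^ 2 = w ^ 2 := (Real.sq_sqrt (by positivity)).symm
  obtain ⟨hlow, hup⟩ := hδ.2 T hT u fun j => restr_of_notMem h
  rw [hw2] at hlow hup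
  have hsplit : h ⬝ᵥ M *ᵥ u = quad M u + restr Tᶜ h ⬝ᵥ M *ᵥ u := by
    conv_lhs => rw [← restr_add_restr_compl T h]
    rw [add_dotProduct]
    rfl
  have hcs : h ⬝ᵥ M *ᵥ u ≤ √(1 + δ) * √(quad M h) * w := by
    calc h ⬝ᵥ M *ᵥ u ≤ √((h ⬝ᵥ M *ᵥ u) ^ 2) := by rw [Real.sqrt_sq_eq_abs]; exact le_abs_self _
      _ ≤ √(quad M h * ((1 + δ) * w ^ 2)) := Real.sqrt_le_sqrt <|
          (sq_dotProduct_mulVec_le hM h u).trans <|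
            mul_le_mul_of_nonneg_left hup (quad_nonneg hM h)
      _ = √(1 + δ) * √(quad M h) * w := by
          rw [Real.sqrt_mul (quad_nonneg hM h), Real.sqrt_mul (by linarith [hδ.1]),
            Real.sqrt_sq hw0]
          ring
  have hkey : (1 - δ - θ) * w * w ≤ √(1 + δ) * √(quad M h) * w := by
    nlinarith [neg_abs_le (restr Tᶜ h ⬝ᵥ M *ᵥ u)]
  rcases hw0.eq_or_lt with hw | hw
  · rw [← hw, mul_zero]; positivity
  · exact le_of_mul_le_mul_right hkey hw

end LowerBound

section Phi

variable {p : ℕ} {M : Matrix (Fin p) (Fin p) ℝ}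

lemma div_sqrt_le_sqrt_quad_div_l2 (hM : M.PosSemidef) {S : ℕ} (hS : 0 < S) (hp : 2 * S ≤ p)
    {δ θ : ℝ} (hδ : IsRICBound (2 * S) M δ) (hθ : IsROCBound S (2 * S) M θ)
    (hδθ : 0 ≤ 1 - δ - θ) {T0 T : Finset (Fin p)} (hT0 : T0.card = S) (hT0T : T0 ⊆ T)
    (hT : T.card ≤ 2 * S) {h : Fin p → ℝ} (hh : h ≠ 0) (hc : coneC T0 h)
    (hD : ∀ j ∈ T \ T0, linf (restr Tᶜ h) ≤ |h j|) :
    (1 - δ - θ) / √(1 + δ) ≤ √(quad M h) / l2 (restr T h) := by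
  obtain ⟨T', hTT', hT'card, t, ht0, htin, htout⟩ :=
    exists_superset_card_eq_of_linf_le hT0T (by omega) hT hp hD
  set w := l2 (restr T' h)
  have hsqrtS : 0 < √S := Real.sqrt_pos.2 (by exact_mod_cast hS)
  have hcross : |restr T'ᶜ h ⬝ᵥ M *ᵥ restr T' h| ≤ θ * w ^ 2 := by
    have hshift := sqrt_mul_abs_restr_dotProduct_le hθ (fun j => restr_of_notMem h)
      hT'card.le h disjoint_compl_left ht0 htout
    have htail := card_mul_add_sum_compl_le hc (hT0T.trans hTT')
      (by rw [Finset.card_sdiff_of_subset (hT0T.trans hTT'), hT'card, hT0]; omega) htin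
    rw [hT0] at htail
    refine le_of_mul_le_mul_left ?_ hsqrtS
    calc √S * |restr T'ᶜ h ⬝ᵥ M *ᵥ restr T' h| ≤ θ * w * (S * t + ∑ j ∈ T'ᶜ, |h j|) := hshift
      _ ≤ θ * w * (√S * w) := by gcongr; exact mul_nonneg hθ.1 (l2_nonneg _)
      _ = √S * (θ * w ^ 2) := by ring
  obtain ⟨j, hjT0, hj⟩ := exists_mem_ne_zero_of_coneC hh hc
  have hwT : 0 < l2 (restr T h) := l2_restr_pos (hT0T hjT0) hj
  rw [div_le_div_iff₀ (Real.sqrt_pos.2 (by linarith [hδ.1])) hwT]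
  calc (1 - δ - θ) * l2 (restr T h) ≤ (1 - δ - θ) * w := by gcongr; exact l2_restr_mono hTT' h
    _ ≤ √(1 + δ) * √(quad M h) := one_sub_sub_mul_l2_le hM hδ hT'card.le h hcross
    _ = √(quad M h) * √(1 + δ) := mul_comm _ _

lemma div_sqrt_le_phi2S (hM : M.PosSemidef) {S : ℕ} (hS : 0 < S) (hp : 2 * S ≤ p)
    {δ θ : ℝ} (hδ : IsRICBound (2 * S) M δ) (hθ : IsROCBound S (2 * S) M θ)
    (hδθ : 0 ≤ 1 - δ - θ) {T0 : Finset (Fin p)} (hT0 : T0.card = S) :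
    (1 - δ - θ) / √(1 + δ) ≤ phi2S S T0 M := by
  obtain ⟨j, hj⟩ := Finset.card_pos.1 (hT0 ▸ hS)
  refine le_csInf ⟨_, T0, subset_rfl, by omega, restr T0 1, fun h0 => ?_, ?_, by simp, rfl⟩ ?_
  · simpa [restr, hj] using congrFun h0 j
  · simp only [coneC, l1_restr]
    rw [Finset.sum_eq_zero fun k hk => by rw [restr_of_notMem _ (Finset.mem_compl.1 hk), abs_zero]]
    positivity
  · rintro _ ⟨T, hT0T, hT, h, hh, hc, hD, rfl⟩
    exact div_sqrt_le_sqrt_quad_div_l2 hM hS hp hδ hθ hδθ hT0 hT0T hT hh hc hD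

end Phi

/-- If `1 - δ_{2S}(Σ) - θ_{S,2S}(Σ) > 0`, then `φ_{2S}(T₀; Σ) > 0`. -/
theorem stmt1 {p S : ℕ} (hS : 1 ≤ S) (hp : 3 * S ≤ p)
    (M : Matrix (Fin p) (Fin p) ℝ) (hM : M.PosSemidef)
    (T0 : Finset (Fin p)) (hT0 : T0.card = S)
    (hUUP : 0 < 1 - deltaRIC (2 * S) M - thetaROC S (2 * S) M) :
    0 < phi2S S T0 M := by
  set ε := (1 - deltaRIC (2 * S) M - thetaROC S (2 * S) M) / 2 with hε
  obtain ⟨δ, hδ, hδlt⟩ :=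
    Real.lt_sInf_add_pos (isRICBound_nonempty (2 * S) M) (ε := ε) (by positivity)
  obtain ⟨θ, hθ, hθlt⟩ :=
    Real.lt_sInf_add_pos (isROCBound_nonempty S (2 * S) M) (ε := ε) (by positivity)
  rw [← deltaRIC_eq_sInf] at hδlt
  rw [← thetaROC_eq_sInf] at hθlt
  have hδθ : 0 < 1 - δ - θ := by linarith
  calc 0 < (1 - δ - θ) / √(1 + δ) := div_pos hδθ (Real.sqrt_pos.2 (by linarith [hδ.1]))
    _ ≤ phi2S S T0 M := div_sqrt_le_phi2S hM hS (by omega) hδ hθ hδθ.le hT0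
end

section
/- Fix a fixed-design Cox partial likelihood with score U and information matrix J, with covariates bounded by |z_i^j| ≤ K₁ for all i, j. Let β₀ ∈ ℝ^p with support T₀ := {j : β₀ⱼ ≠ 0} of cardinality S ≥ 1, and let β̂ ∈ ℝ^p and γ ≥ 0 satisfy ‖U(β₀)‖_∞ ≤ γ, ‖U(β̂)‖_∞ ≤ γ, and ‖β̂‖₁ ≤ ‖β₀‖₁. If the compatibility factor satisfies κ(T₀; J(β₀)) > 0, then ‖β̂ − β₀‖₁ ≤ 8Sγ exp(4K₁‖β₀‖₁) / κ(T₀; J(β₀))². -/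
open Matrix Finset

/-- `S⁰_i(β) = Σ_{k ∈ R_i} exp(z_kᵀβ)` for the fixed-design Cox partial likelihood. -/
noncomputable def coxS0 {n p : ℕ} (z : Fin n → Fin p → ℝ) (R : Fin n → Finset (Fin n))
    (i : Fin n) (β : Fin p → ℝ) : ℝ :=
  ∑ k ∈ R i, Real.exp (z k ⬝ᵥ β)

/-- The score `U(β) = (1/n) Σ_{i ∈ D} (z_i − S¹_i(β)/S⁰_i(β))`. -/
noncomputable def coxU {n p : ℕ} (z : Fin n → Fin p → ℝ) (D : Finset (Fin n))
    (R : Fin n → Finset (Fin n)) (β : Fin p → ℝ) : Fin p → ℝ :=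
  fun j => (n : ℝ)⁻¹ *
    ∑ i ∈ D, (z i j - (∑ k ∈ R i, Real.exp (z k ⬝ᵥ β) * z k j) / coxS0 z R i β)

/-- The information matrix
`J(β) = (1/n) Σ_{i ∈ D} (S²_i(β)/S⁰_i(β) − (S¹_i(β)/S⁰_i(β))(S¹_i(β)/S⁰_i(β))ᵀ)`. -/
noncomputable def coxJ {n p : ℕ} (z : Fin n → Fin p → ℝ) (D : Finset (Fin n))
    (R : Fin n → Finset (Fin n)) (β : Fin p → ℝ) : Matrix (Fin p) (Fin p) ℝ :=
  fun a b => (n : ℝ)⁻¹ *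
    ∑ i ∈ D,
      ((∑ k ∈ R i, Real.exp (z k ⬝ᵥ β) * z k a * z k b) / coxS0 z R i β -
        ((∑ k ∈ R i, Real.exp (z k ⬝ᵥ β) * z k a) / coxS0 z R i β) *
          ((∑ k ∈ R i, Real.exp (z k ⬝ᵥ β) * z k b) / coxS0 z R i β))

section
variable {ι : Type*}

lemma double_id1 (Ri : Finset ι) (w x : ι → ℝ) :
    ∑ k ∈ Ri, ∑ l ∈ Ri, w k * w l * (x k - x l)^2
      = 2*((∑ k ∈ Ri, w k) * (∑ k ∈ Ri, w k * x k ^ 2) - (∑ k ∈ Ri, w k * x k)^2) := by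
  have inner : ∀ k, ∑ l ∈ Ri, w k * w l * (x k - x l)^2
      = (w k * x k ^ 2) * (∑ l ∈ Ri, w l) - (2*(w k * x k)) * (∑ l ∈ Ri, w l * x l)
        + w k * (∑ l ∈ Ri, w l * x l ^ 2) := by
    intro k
    simp only [Finset.mul_sum, ← Finset.sum_sub_distrib, ← Finset.sum_add_distrib]
    exact Finset.sum_congr rfl fun l _ => by ring
  simp_rw [inner]
  simp only [Finset.sum_add_distrib, Finset.sum_sub_distrib, ← Finset.sum_mul]
  have h2 : ∑ k ∈ Ri, 2 * (w k * x k) = 2 * ∑ k ∈ Ri, w k * x k := by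
    rw [Finset.mul_sum]
  rw [h2]; ring

lemma double_id2 (Ri : Finset ι) (w x y : ι → ℝ) :
    ∑ k ∈ Ri, ∑ l ∈ Ri, w k * w l * ((x k - x l) * (y k - y l))
      = 2*((∑ k ∈ Ri, w k) * (∑ k ∈ Ri, w k * x k * y k)
          - (∑ k ∈ Ri, w k * x k) * (∑ k ∈ Ri, w k * y k)) := by
  have inner : ∀ k, ∑ l ∈ Ri, w k * w l * ((x k - x l) * (y k - y l))
      = (w k * x k * y k) * (∑ l ∈ Ri, w l) - (w k * x k) * (∑ l ∈ Ri, w l * y l)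
        - (w k * y k) * (∑ l ∈ Ri, w l * x l) + w k * (∑ l ∈ Ri, w l * x l * y l) := by
    intro k
    simp only [Finset.mul_sum, ← Finset.sum_sub_distrib, ← Finset.sum_add_distrib]
    exact Finset.sum_congr rfl fun l _ => by ring
  simp_rw [inner]
  simp only [Finset.sum_add_distrib, Finset.sum_sub_distrib, ← Finset.sum_mul]
  ring

end

section
variable {ι : Type*}

lemma pair_ineq (M a b : ℝ) (ha : -M ≤ a) (hb : -M ≤ b) :
    Real.exp (-M) * (a-b)^2 ≤ (a-b)*(Real.exp a - Real.exp b) := by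
  rcases le_total b a with h | h
  · have h1 : Real.exp b * (a - b + 1) ≤ Real.exp a := by
      calc Real.exp b * (a - b + 1) ≤ Real.exp b * Real.exp (a - b) := by
            have := Real.add_one_le_exp (a - b); nlinarith [Real.exp_pos b]
        _ = Real.exp (b + (a-b)) := (Real.exp_add _ _).symm
        _ = Real.exp a := by ring_nf
    have h2 : Real.exp (-M) ≤ Real.exp b := Real.exp_le_exp.mpr (by linarith)
    nlinarith [Real.exp_pos b, sq_nonneg (a-b)]
  · have h1 : Real.exp a * (b - a + 1) ≤ Real.exp b := by
      calc Real.exp a * (b - a + 1) ≤ Real.exp a * Real.exp (b - a) := by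
            have := Real.add_one_le_exp (b - a); nlinarith [Real.exp_pos a]
        _ = Real.exp (a + (b-a)) := (Real.exp_add _ _).symm
        _ = Real.exp b := by ring_nf
    have h2 : Real.exp (-M) ≤ Real.exp a := Real.exp_le_exp.mpr (by linarith)
    nlinarith [Real.exp_pos a, sq_nonneg (a-b)]

lemma per_i (Ri : Finset ι) (hne : Ri.Nonempty) (w x : ι → ℝ)
    (hw : ∀ k ∈ Ri, 0 < w k) (M : ℝ) (hx : ∀ k ∈ Ri, |x k| ≤ M) :
    (∑ k ∈ Ri, w k * x k ^ 2) / (∑ k ∈ Ri, w k)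
      - ((∑ k ∈ Ri, w k * x k) / (∑ k ∈ Ri, w k))^2
    ≤ Real.exp (2*M) *
      ((∑ k ∈ Ri, (w k * Real.exp (x k)) * x k) / (∑ k ∈ Ri, w k * Real.exp (x k))
        - (∑ k ∈ Ri, w k * x k) / (∑ k ∈ Ri, w k)) := by
  set A := ∑ k ∈ Ri, w k with hAdef
  set B := ∑ k ∈ Ri, w k * Real.exp (x k) with hBdef
  set SX := ∑ k ∈ Ri, w k * x k with hSXdef
  set SX2 := ∑ k ∈ Ri, w k * x k ^ 2 with hSX2def
  set TX := ∑ k ∈ Ri, (w k * Real.exp (x k)) * x k with hTXdef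
  have hA : 0 < A := Finset.sum_pos hw hne
  have hB : 0 < B := Finset.sum_pos (fun k hk => mul_pos (hw k hk) (Real.exp_pos _)) hne
  -- P2 and P1
  set P2 := ∑ k ∈ Ri, ∑ l ∈ Ri, w k * w l * (x k - x l)^2 with hP2def
  set P1 := ∑ k ∈ Ri, ∑ l ∈ Ri, w k * w l *
      ((x k - x l) * (Real.exp (x k) - Real.exp (x l))) with hP1def
  have id1 : P2 = 2*(A * SX2 - SX^2) := double_id1 Ri w x
  have id2 : P1 = 2*(A * TX - SX * B) := by
    have := double_id2 Ri w x (fun k => Real.exp (x k))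
    simp only [hP1def, hTXdef, hBdef, hSXdef, hAdef]
    rw [this]
    have e1 : ∑ k ∈ Ri, w k * x k * Real.exp (x k) = ∑ k ∈ Ri, w k * Real.exp (x k) * x k :=
      Finset.sum_congr rfl fun k _ => by ring
    rw [e1]
  have hP2nn : 0 ≤ P2 := Finset.sum_nonneg fun k _ => Finset.sum_nonneg fun l hl =>
    mul_nonneg (mul_nonneg (hw k ‹k ∈ Ri›).le (hw l hl).le) (sq_nonneg _)
  have hP1ge : Real.exp (-M) * P2 ≤ P1 := by
    rw [hP1def, hP2def, Finset.mul_sum]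
    refine Finset.sum_le_sum fun k hk => ?_
    rw [Finset.mul_sum]
    refine Finset.sum_le_sum fun l hl => ?_
    have hkey := pair_ineq M (x k) (x l) (abs_le.mp (hx k hk)).1 (abs_le.mp (hx l hl)).1
    have hwl : 0 ≤ w k * w l := mul_nonneg (hw k hk).le (hw l hl).le
    calc Real.exp (-M) * (w k * w l * (x k - x l)^2)
        = (w k * w l) * (Real.exp (-M) * (x k - x l)^2) := by ring
      _ ≤ (w k * w l) * ((x k - x l) * (Real.exp (x k) - Real.exp (x l))) :=
          mul_le_mul_of_nonneg_left hkey hwl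
  have hBle : B ≤ Real.exp M * A := by
    rw [hBdef, hAdef, Finset.mul_sum]
    refine Finset.sum_le_sum fun k hk => ?_
    have h1 : Real.exp (x k) ≤ Real.exp M := Real.exp_le_exp.mpr (abs_le.mp (hx k hk)).2
    nlinarith [hw k hk]
  have e2 : Real.exp (2*M) = Real.exp M * Real.exp M := by rw [← Real.exp_add]; ring_nf
  have e3 : Real.exp (-M) * Real.exp M = 1 := by rw [← Real.exp_add]; simp
  have final : P2 * (2*(A*B)) ≤ (Real.exp (2*M) * P1) * (2*A^2) := by
    have s1 : P2 * B ≤ P2 * (Real.exp M * A) := mul_le_mul_of_nonneg_left hBle hP2nn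
    have s2 : P2 ≤ Real.exp M * P1 := by
      have := mul_le_mul_of_nonneg_left hP1ge (Real.exp_pos M).le
      calc P2 = Real.exp M * (Real.exp (-M) * P2) := by
            rw [← mul_assoc, mul_comm (Real.exp M), e3, one_mul]
        _ ≤ Real.exp M * P1 := this
    calc P2 * (2*(A*B)) = (2*A) * (P2 * B) := by ring
      _ ≤ (2*A) * (P2 * (Real.exp M * A)) := by
          apply mul_le_mul_of_nonneg_left s1; positivity
      _ = (Real.exp M * P2) * (2*A^2) := by ring
      _ ≤ (Real.exp M * (Real.exp M * P1)) * (2*A^2) := by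
          apply mul_le_mul_of_nonneg_right _ (by positivity)
          exact mul_le_mul_of_nonneg_left s2 (Real.exp_pos M).le
      _ = (Real.exp (2*M) * P1) * (2*A^2) := by rw [e2]; ring
  have lhs_eq : SX2/A - (SX/A)^2 = P2 / (2*A^2) := by
    rw [id1]; field_simp
  have rhs_eq : TX/B - SX/A = P1 / (2*(A*B)) := by
    rw [id2]; field_simp
  rw [lhs_eq, rhs_eq, ← mul_div_assoc]
  exact (div_le_div_iff₀ (by positivity) (by positivity)).mpr final

end


lemma coxU_dot {n p : ℕ} (z : Fin n → Fin p → ℝ) (D : Finset (Fin n))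
    (R : Fin n → Finset (Fin n)) (β h : Fin p → ℝ) :
    (coxU z D R β) ⬝ᵥ h = (n : ℝ)⁻¹ * ∑ i ∈ D,
      ((z i ⬝ᵥ h) - (∑ k ∈ R i, Real.exp (z k ⬝ᵥ β) * (z k ⬝ᵥ h)) / coxS0 z R i β) := by
  simp only [coxU, dotProduct]
  simp_rw [mul_assoc, ← Finset.mul_sum]
  congr 1
  simp_rw [Finset.sum_mul]
  rw [Finset.sum_comm]
  refine Finset.sum_congr rfl fun i hi => ?_
  simp_rw [sub_mul]
  rw [Finset.sum_sub_distrib]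
  congr 1
  simp_rw [div_mul_eq_mul_div, ← Finset.sum_div]
  congr 1
  simp_rw [Finset.sum_mul]
  rw [Finset.sum_comm]
  refine Finset.sum_congr rfl fun k _ => ?_
  simp_rw [mul_assoc]
  rw [← Finset.mul_sum]

lemma sum_rot {ι κ M : Type*} [AddCommMonoid M] [Fintype ι] (u : Finset κ)
    (f : ι → ι → κ → M) :
    ∑ a, ∑ b, ∑ k ∈ u, f a b k = ∑ k ∈ u, ∑ a, ∑ b, f a b k := by
  have h1 : ∀ a : ι, ∑ b : ι, ∑ k ∈ u, f a b k = ∑ k ∈ u, ∑ b : ι, f a b k :=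
    fun a => Finset.sum_comm
  simp_rw [h1]
  exact Finset.sum_comm

lemma sum_dot_sq {n p : ℕ} (Ri : Finset (Fin n)) (e : Fin n → ℝ)
    (z : Fin n → Fin p → ℝ) (h : Fin p → ℝ) :
    ∑ a, ∑ b, (h a * h b) * (∑ k ∈ Ri, e k * z k a * z k b)
      = ∑ k ∈ Ri, e k * (z k ⬝ᵥ h)^2 := by
  simp_rw [Finset.mul_sum]
  rw [show (∑ a, ∑ b, ∑ k ∈ Ri, h a * h b * (e k * z k a * z k b))
      = ∑ k ∈ Ri, ∑ a, ∑ b, h a * h b * (e k * z k a * z k b) from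
    sum_rot Ri _]
  refine Finset.sum_congr rfl fun k _ => ?_
  have hs := Finset.sum_mul_sum Finset.univ Finset.univ
    (fun a => h a * z k a) (fun b => h b * z k b * e k)
  have e1 : ∑ a, ∑ b, h a * h b * (e k * z k a * z k b)
      = ∑ a, ∑ b, (h a * z k a) * (h b * z k b * e k) :=
    Finset.sum_congr rfl fun a _ => Finset.sum_congr rfl fun b _ => by ring
  rw [e1, ← hs]
  have e2 : ∑ a, h a * z k a = z k ⬝ᵥ h :=
    Finset.sum_congr rfl fun a _ => mul_comm _ _
  have e3 : ∑ j, h j * z k j * e k = (∑ j, h j * z k j) * e k := by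
    rw [Finset.sum_mul]
  rw [e3, e2]
  ring

lemma sum_dot_lin {n p : ℕ} (Ri : Finset (Fin n)) (e : Fin n → ℝ)
    (z : Fin n → Fin p → ℝ) (h : Fin p → ℝ) :
    ∑ a, h a * (∑ k ∈ Ri, e k * z k a) = ∑ k ∈ Ri, e k * (z k ⬝ᵥ h) := by
  simp_rw [Finset.mul_sum]
  rw [Finset.sum_comm]
  refine Finset.sum_congr rfl fun k _ => ?_
  simp only [dotProduct, Finset.mul_sum]
  exact Finset.sum_congr rfl fun a _ => by ring

lemma coxJ_quad {n p : ℕ} (z : Fin n → Fin p → ℝ) (D : Finset (Fin n))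
    (R : Fin n → Finset (Fin n)) (β h : Fin p → ℝ) :
    quad (coxJ z D R β) h = (n : ℝ)⁻¹ * ∑ i ∈ D,
      ((∑ k ∈ R i, Real.exp (z k ⬝ᵥ β) * (z k ⬝ᵥ h) ^ 2) / coxS0 z R i β -
        ((∑ k ∈ R i, Real.exp (z k ⬝ᵥ β) * (z k ⬝ᵥ h)) / coxS0 z R i β) ^ 2) := by
  have swap_dot : ∀ (Ri : Finset (Fin n)) (e : Fin n → ℝ),
      ∑ a, (∑ k ∈ Ri, e k * z k a) * h a = ∑ k ∈ Ri, e k * (z k ⬝ᵥ h) := by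
    intro Ri e
    simp_rw [Finset.sum_mul]
    rw [Finset.sum_comm]
    refine Finset.sum_congr rfl fun k _ => ?_
    simp_rw [mul_assoc]
    rw [← Finset.mul_sum]
    rfl
  have hq : quad (coxJ z D R β) h
      = ∑ a, ∑ b, (h a * h b) * coxJ z D R β a b := by
    simp only [quad, dotProduct, Matrix.mulVec]
    refine Finset.sum_congr rfl fun a _ => ?_
    rw [Finset.mul_sum]
    refine Finset.sum_congr rfl fun b _ => ?_
    ring
  rw [hq]
  simp only [coxJ]
  simp_rw [mul_left_comm _ ((n:ℝ)⁻¹), ← Finset.mul_sum]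
  congr 1
  simp_rw [Finset.mul_sum]
  rw [show (∑ a, ∑ b, ∑ i ∈ D, (h a * h b) *
        ((∑ k ∈ R i, Real.exp (z k ⬝ᵥ β) * z k a * z k b) / coxS0 z R i β -
          ((∑ k ∈ R i, Real.exp (z k ⬝ᵥ β) * z k a) / coxS0 z R i β) *
            ((∑ k ∈ R i, Real.exp (z k ⬝ᵥ β) * z k b) / coxS0 z R i β)))
      = ∑ i ∈ D, ∑ a, ∑ b, (h a * h b) *
        ((∑ k ∈ R i, Real.exp (z k ⬝ᵥ β) * z k a * z k b) / coxS0 z R i β -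
          ((∑ k ∈ R i, Real.exp (z k ⬝ᵥ β) * z k a) / coxS0 z R i β) *
            ((∑ k ∈ R i, Real.exp (z k ⬝ᵥ β) * z k b) / coxS0 z R i β)) from
    sum_rot D _]
  refine Finset.sum_congr rfl fun i _ => ?_
  set e : Fin n → ℝ := fun k => Real.exp (z k ⬝ᵥ β) with he
  set A := coxS0 z R i β with hA
  have split : ∑ a, ∑ b, (h a * h b) *
      ((∑ k ∈ R i, e k * z k a * z k b) / A -
        ((∑ k ∈ R i, e k * z k a) / A) * ((∑ k ∈ R i, e k * z k b) / A))
    = (∑ a, ∑ b, (h a * h b) * ((∑ k ∈ R i, e k * z k a * z k b) / A))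
      - ∑ a, ∑ b, (h a * h b) *
        (((∑ k ∈ R i, e k * z k a) / A) * ((∑ k ∈ R i, e k * z k b) / A)) := by
    simp_rw [mul_sub, Finset.sum_sub_distrib]
  rw [split]
  have p1 : (∑ a, ∑ b, (h a * h b) * ((∑ k ∈ R i, e k * z k a * z k b) / A))
      = (∑ k ∈ R i, e k * (z k ⬝ᵥ h)^2) / A := by
    simp_rw [← mul_div_assoc, ← Finset.sum_div]
    rw [sum_dot_sq]
  have p2 : (∑ a, ∑ b, (h a * h b) *
        (((∑ k ∈ R i, e k * z k a) / A) * ((∑ k ∈ R i, e k * z k b) / A)))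
      = ((∑ k ∈ R i, e k * (z k ⬝ᵥ h)) / A)^2 := by
    have e1 : ∀ a b : Fin p, (h a * h b) *
        (((∑ k ∈ R i, e k * z k a) / A) * ((∑ k ∈ R i, e k * z k b) / A))
      = (h a * ((∑ k ∈ R i, e k * z k a) / A)) *
        (h b * ((∑ k ∈ R i, e k * z k b) / A)) := fun a b => by ring
    simp_rw [e1]
    rw [← Finset.sum_mul_sum]
    have e2 : ∑ a, h a * ((∑ k ∈ R i, e k * z k a) / A)
        = (∑ k ∈ R i, e k * (z k ⬝ᵥ h)) / A := by
      simp_rw [← mul_div_assoc, ← Finset.sum_div]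
      rw [sum_dot_lin]
    rw [e2]; ring
  rw [p1, p2]


lemma l1_nonneg {p : ℕ} (v : Fin p → ℝ) : 0 ≤ l1 v :=
  Finset.sum_nonneg fun j _ => abs_nonneg _

lemma l1_split {p : ℕ} (T : Finset (Fin p)) (v : Fin p → ℝ) :
    l1 v = l1 (restr T v) + l1 (restr Tᶜ v) := by
  unfold l1 restr
  rw [← Finset.sum_add_distrib]
  refine Finset.sum_congr rfl fun j _ => ?_
  by_cases hj : j ∈ T <;> simp [hj, Finset.mem_compl]

/-- `l₁` bound via the compatibility factor. -/
theorem stmt9 {n p : ℕ} (z : Fin n → Fin p → ℝ) (D : Finset (Fin n))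
    (R : Fin n → Finset (Fin n)) (hR : ∀ i ∈ D, (R i).Nonempty)
    (K₁ : ℝ) (hz : ∀ i j, |z i j| ≤ K₁)
    (β₀ : Fin p → ℝ) (T0 : Finset (Fin p)) (hT0 : ∀ j, j ∈ T0 ↔ β₀ j ≠ 0)
    (S : ℕ) (hS : T0.card = S) (hS1 : 1 ≤ S)
    (βhat : Fin p → ℝ) (γ : ℝ) (hγ : 0 ≤ γ)
    (hU0 : linf (coxU z D R β₀) ≤ γ) (hUhat : linf (coxU z D R βhat) ≤ γ)
    (hl1 : l1 βhat ≤ l1 β₀)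
    (hkappa : 0 < kappa T0 (coxJ z D R β₀)) :
    l1 (βhat - β₀) ≤
      8 * S * γ * Real.exp (4 * K₁ * l1 β₀) / kappa T0 (coxJ z D R β₀) ^ 2 := by
  classical
  set J := coxJ z D R β₀ with hJ
  set κ := kappa T0 J with hκ
  set h : Fin p → ℝ := βhat - β₀ with hhdef
  have hhj : ∀ j, h j = βhat j - β₀ j := fun j => rfl
  -- trivial case
  by_cases hh0 : h = 0
  · rw [hh0]
    have : l1 (0 : Fin p → ℝ) = 0 := by simp [l1]
    rw [this]
    apply div_nonneg _ (sq_nonneg _)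
    have : (0:ℝ) ≤ 8 * S * γ := by positivity
    positivity
  -- support facts
  have hsupp : ∀ j, j ∉ T0 → β₀ j = 0 := fun j hj => by
    by_contra hne; exact hj ((hT0 j).mpr hne)
  -- cone property
  have hrc : restr T0ᶜ βhat = restr T0ᶜ h := by
    funext j
    unfold restr
    by_cases hj : j ∈ T0ᶜ
    · simp only [hj, if_true, hhj j, hsupp j (Finset.mem_compl.mp hj), sub_zero]
    · simp [hj]
  have hβ0T0 : l1 (restr T0ᶜ β₀) = 0 := by
    unfold l1 restr
    refine Finset.sum_eq_zero fun j _ => ?_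
    by_cases hj : j ∈ T0ᶜ
    · simp [hj, hsupp j (Finset.mem_compl.mp hj)]
    · simp [hj]
  have htri : l1 (restr T0 β₀) ≤ l1 (restr T0 βhat) + l1 (restr T0 h) := by
    unfold l1 restr
    rw [← Finset.sum_add_distrib]
    refine Finset.sum_le_sum fun j _ => ?_
    by_cases hj : j ∈ T0
    · simp only [hj, if_true]
      have : β₀ j = βhat j - h j := by rw [hhj j]; ring
      rw [this]
      exact abs_sub _ _
    · simp [hj]
  have cone : l1 (restr T0ᶜ h) ≤ l1 (restr T0 h) := by
    have h1 := l1_split T0 βhat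
    have h2 := l1_split T0 β₀
    rw [hrc] at h1
    linarith
  set t := l1 (restr T0 h) with htdef
  have hlh : l1 h ≤ 2 * t := by
    have := l1_split T0 h
    linarith
  have ht0 : 0 < t := by
    rcases (l1_nonneg (restr T0 h)).lt_or_eq with h' | h'
    · exact h'
    · exfalso
      apply hh0
      have e0 : ∑ j, |restr T0 h j| = 0 := h'.symm
      have e1 : ∑ j, |restr T0ᶜ h j| = 0 := by
        have h2 : l1 (restr T0ᶜ h) ≤ 0 :=
          le_trans cone (by rw [htdef, ← h'] : t ≤ (0:ℝ))
        exact le_antisymm h2 (l1_nonneg _)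
      funext j
      show h j = 0
      by_cases hj : j ∈ T0
      · have := (Finset.sum_eq_zero_iff_of_nonneg
          (fun j _ => abs_nonneg _)).mp e0 j (Finset.mem_univ j)
        have h3 := abs_eq_zero.mp this
        simpa [restr, hj] using h3
      · have := (Finset.sum_eq_zero_iff_of_nonneg
          (fun j _ => abs_nonneg _)).mp e1 j (Finset.mem_univ j)
        have h3 := abs_eq_zero.mp this
        simpa [restr, Finset.mem_compl, hj] using h3
  -- l1 h ≤ 2 l1 β₀
  have hl1h2 : l1 h ≤ 2 * l1 β₀ := by
    have : l1 h ≤ l1 βhat + l1 β₀ := by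
      unfold l1
      rw [← Finset.sum_add_distrib]
      refine Finset.sum_le_sum fun j _ => ?_
      rw [hhj j]
      exact abs_sub _ _
    linarith
  -- nonempty index type
  have hT0ne : T0.Nonempty := Finset.card_pos.mp (by rw [hS]; exact hS1)
  obtain ⟨j0, hj0⟩ := hT0ne
  have hpne : Nonempty (Fin p) := ⟨j0⟩
  set M := 2*K₁*l1 β₀ with hMdef
  have hx : ∀ k : Fin n, |z k ⬝ᵥ h| ≤ M := by
    intro k
    have hK : 0 ≤ K₁ := (abs_nonneg _).trans (hz k j0)
    have h1 : |z k ⬝ᵥ h| ≤ K₁ * l1 h := by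
      simp only [dotProduct]
      calc |∑ j, z k j * h j| ≤ ∑ j, |z k j * h j| := Finset.abs_sum_le_sum_abs _ _
        _ ≤ ∑ j, K₁ * |h j| := Finset.sum_le_sum fun j _ => by
            rw [abs_mul]; exact mul_le_mul_of_nonneg_right (hz k j) (abs_nonneg _)
        _ = K₁ * l1 h := (Finset.mul_sum _ _ _).symm
    calc |z k ⬝ᵥ h| ≤ K₁ * l1 h := h1
      _ ≤ K₁ * (2 * l1 β₀) := mul_le_mul_of_nonneg_left hl1h2 hK
      _ = M := by rw [hMdef]; ring
  have hUc : ∀ (β : Fin p → ℝ), linf (coxU z D R β) ≤ γ → ∀ j, |coxU z D R β j| ≤ γ := by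
    intro β hβ j
    refine le_trans ?_ hβ
    simp only [linf]
    exact le_ciSup (f := fun j => |coxU z D R β j|)
      (Set.Finite.bddAbove (Set.finite_range _)) j
  have hdot : ∀ (β : Fin p → ℝ), linf (coxU z D R β) ≤ γ →
      |(coxU z D R β) ⬝ᵥ h| ≤ γ * l1 h := by
    intro β hβ
    simp only [dotProduct]
    calc |∑ j, coxU z D R β j * h j| ≤ ∑ j, |coxU z D R β j * h j| :=
          Finset.abs_sum_le_sum_abs _ _
      _ ≤ ∑ j, γ * |h j| := Finset.sum_le_sum fun j _ => by
          rw [abs_mul]; exact mul_le_mul_of_nonneg_right (hUc β hβ j) (abs_nonneg _)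
      _ = γ * l1 h := (Finset.mul_sum _ _ _).symm
  have hexp : ∀ k : Fin n, Real.exp (z k ⬝ᵥ βhat)
      = Real.exp (z k ⬝ᵥ β₀) * Real.exp (z k ⬝ᵥ h) := by
    intro k
    rw [← Real.exp_add]
    congr 1
    rw [hhdef, dotProduct_sub]
    ring
  have hkey : ∀ i ∈ D,
      (∑ k ∈ R i, Real.exp (z k ⬝ᵥ β₀) * (z k ⬝ᵥ h) ^ 2) / coxS0 z R i β₀ -
        ((∑ k ∈ R i, Real.exp (z k ⬝ᵥ β₀) * (z k ⬝ᵥ h)) / coxS0 z R i β₀) ^ 2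
      ≤ Real.exp (2*M) *
        ((∑ k ∈ R i, Real.exp (z k ⬝ᵥ βhat) * (z k ⬝ᵥ h)) / coxS0 z R i βhat -
          (∑ k ∈ R i, Real.exp (z k ⬝ᵥ β₀) * (z k ⬝ᵥ h)) / coxS0 z R i β₀) := by
    intro i hi
    have hper := per_i (R i) (hR i hi) (fun k => Real.exp (z k ⬝ᵥ β₀))
      (fun k => z k ⬝ᵥ h) (fun k _ => Real.exp_pos _) M (fun k _ => hx k)
    have e1 : coxS0 z R i βhat
        = ∑ k ∈ R i, Real.exp (z k ⬝ᵥ β₀) * Real.exp (z k ⬝ᵥ h) :=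
      Finset.sum_congr rfl fun k _ => hexp k
    have e2 : ∑ k ∈ R i, Real.exp (z k ⬝ᵥ βhat) * (z k ⬝ᵥ h)
        = ∑ k ∈ R i, (Real.exp (z k ⬝ᵥ β₀) * Real.exp (z k ⬝ᵥ h)) * (z k ⬝ᵥ h) :=
      Finset.sum_congr rfl fun k _ => by rw [hexp k]
    rw [e1, e2]
    exact hper
  have hquad : quad J h = (n:ℝ)⁻¹ * ∑ i ∈ D,
      ((∑ k ∈ R i, Real.exp (z k ⬝ᵥ β₀) * (z k ⬝ᵥ h) ^ 2) / coxS0 z R i β₀ -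
        ((∑ k ∈ R i, Real.exp (z k ⬝ᵥ β₀) * (z k ⬝ᵥ h)) / coxS0 z R i β₀) ^ 2) := by
    rw [hJ]
    exact coxJ_quad z D R β₀ h
  have hdiff : coxU z D R β₀ ⬝ᵥ h - coxU z D R βhat ⬝ᵥ h
      = (n:ℝ)⁻¹ * ∑ i ∈ D,
        ((∑ k ∈ R i, Real.exp (z k ⬝ᵥ βhat) * (z k ⬝ᵥ h)) / coxS0 z R i βhat -
          (∑ k ∈ R i, Real.exp (z k ⬝ᵥ β₀) * (z k ⬝ᵥ h)) / coxS0 z R i β₀) := by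
    rw [coxU_dot, coxU_dot, ← mul_sub, ← Finset.sum_sub_distrib]
    congr 1
    refine Finset.sum_congr rfl fun i _ => ?_
    ring
  have hmain : quad J h ≤ Real.exp (2*M) *
      (coxU z D R β₀ ⬝ᵥ h - coxU z D R βhat ⬝ᵥ h) := by
    rw [hquad, hdiff, mul_left_comm]
    refine mul_le_mul_of_nonneg_left ?_ (by positivity)
    rw [Finset.mul_sum]
    exact Finset.sum_le_sum hkey
  have hscore : coxU z D R β₀ ⬝ᵥ h - coxU z D R βhat ⬝ᵥ h ≤ 2 * γ * l1 h := by
    have h1 := abs_le.mp (hdot β₀ hU0)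
    have h2 := abs_le.mp (hdot βhat hUhat)
    linarith [h1.2, h2.1]
  have hquadle : quad J h ≤ 4 * γ * Real.exp (2*M) * t := by
    have h1 : quad J h ≤ Real.exp (2*M) * (2 * γ * l1 h) :=
      hmain.trans (mul_le_mul_of_nonneg_left hscore (Real.exp_pos _).le)
    have h2 : 2 * γ * l1 h ≤ 2 * γ * (2 * t) :=
      mul_le_mul_of_nonneg_left hlh (by linarith)
    calc quad J h ≤ Real.exp (2*M) * (2 * γ * l1 h) := h1
      _ ≤ Real.exp (2*M) * (2 * γ * (2 * t)) :=
          mul_le_mul_of_nonneg_left h2 (Real.exp_pos _).le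
      _ = 4 * γ * Real.exp (2*M) * t := by ring
  have hmem : Real.sqrt S * Real.sqrt (quad J h) / t ∈
      {x | ∃ h' : Fin p → ℝ, h' ≠ 0 ∧ coneC T0 h' ∧
        x = Real.sqrt (T0.card) * Real.sqrt (quad J h') / l1 (restr T0 h')} :=
    ⟨h, hh0, cone, by rw [hS]⟩
  have hbdd : BddBelow {x | ∃ h' : Fin p → ℝ, h' ≠ 0 ∧ coneC T0 h' ∧
      x = Real.sqrt (T0.card) * Real.sqrt (quad J h') / l1 (restr T0 h')} := by
    refine ⟨0, ?_⟩
    rintro x ⟨h', -, -, rfl⟩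
    exact div_nonneg (mul_nonneg (Real.sqrt_nonneg _) (Real.sqrt_nonneg _)) (l1_nonneg _)
  have hκle : κ ≤ Real.sqrt S * Real.sqrt (quad J h) / t := csInf_le hbdd hmem
  have hκt : κ * t ≤ Real.sqrt S * Real.sqrt (quad J h) := (le_div_iff₀ ht0).mp hκle
  have hqnn : 0 ≤ quad J h := by
    by_contra hq
    push_neg at hq
    have hz : Real.sqrt (quad J h) = 0 := Real.sqrt_eq_zero_of_nonpos hq.le
    rw [hz, mul_zero] at hκt
    nlinarith [mul_pos hkappa ht0]
  have hsq : (κ * t)^2 ≤ (S:ℝ) * quad J h := by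
    have h1 : 0 ≤ κ * t := (mul_pos hkappa ht0).le
    have h2 := mul_self_le_mul_self h1 hκt
    have h3 : (Real.sqrt S * Real.sqrt (quad J h)) * (Real.sqrt S * Real.sqrt (quad J h))
        = (S:ℝ) * quad J h := by
      rw [show (Real.sqrt S * Real.sqrt (quad J h)) * (Real.sqrt S * Real.sqrt (quad J h))
          = (Real.sqrt S * Real.sqrt S) * (Real.sqrt (quad J h) * Real.sqrt (quad J h)) by
        ring, Real.mul_self_sqrt (Nat.cast_nonneg S), Real.mul_self_sqrt hqnn]
    rw [sq]
    rw [h3] at h2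
    exact h2
  have hfinal : κ^2 * t ≤ 4 * S * γ * Real.exp (2*M) := by
    have h1 : (S:ℝ) * quad J h ≤ (S:ℝ) * (4 * γ * Real.exp (2*M) * t) :=
      mul_le_mul_of_nonneg_left hquadle (Nat.cast_nonneg S)
    have h2 : κ^2 * t * t ≤ (4 * S * γ * Real.exp (2*M)) * t := by nlinarith [hsq]
    exact le_of_mul_le_mul_right h2 ht0
  have hκ2 : 0 < κ^2 := pow_pos hkappa 2
  have hE : Real.exp (4 * K₁ * l1 β₀) = Real.exp (2*M) := by rw [hMdef]; ring_nf
  rw [hE]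
  have ht4 : t ≤ 4 * S * γ * Real.exp (2*M) / κ^2 :=
    (le_div_iff₀ hκ2).mpr (by linarith)
  calc l1 h ≤ 2 * t := hlh
    _ ≤ 2 * (4 * S * γ * Real.exp (2*M) / κ^2) := by linarith
    _ = 8 * S * γ * Real.exp (2*M) / κ^2 := by ring
end
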